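/- arXiv:2410.24165 — 9 statements merged into one kernel-verified Lean document; each statement's English description precedes it below -/
import Mathlib

section
/- The set of n-term Egyptian fractions {1/m₁ + ⋯ + 1/mₙ : m₁, …, mₙ ∈ ℕ, mᵢ ≥ 1}, together with the sums where some terms are omitted (equivalently, allowing each term to be 0), is a compact subset of ℝ. -/
theorem stmt_2 (n : ℕ) :
    IsCompact {x : ℝ | ∃ a : Fin n → ℝ,
      (∀ i, a i = 0 ∨ ∃ m : ℕ, 1 ≤ m ∧ a i = 1 / m) ∧ x = ∑ i, a i} := by
  have hS : IsCompact (insert (0:ℝ) (Set.range fun m : ℕ => (1:ℝ)/(m+1))) := by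
    apply Filter.Tendsto.isCompact_insert_range
    exact tendsto_one_div_add_atTop_nhds_zero_nat
  have hpi : IsCompact (Set.pi Set.univ
      (fun _ : Fin n => insert (0:ℝ) (Set.range fun m : ℕ => (1:ℝ)/(m+1)))) :=
    isCompact_univ_pi fun _ => hS
  have himg := hpi.image (f := fun a : Fin n → ℝ => ∑ i, a i)
    (continuous_finset_sum _ fun i _ => continuous_apply i)
  convert himg using 1
  ext x
  constructor
  · rintro ⟨a, ha, rfl⟩
    refine ⟨a, fun i _ => ?_, rfl⟩
    rcases ha i with h | ⟨m, hm, h⟩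
    · exact Or.inl h
    · refine Or.inr ⟨m - 1, ?_⟩
      simp only [h]
      rw [Nat.cast_sub hm]
      push_cast
      ring_nf
    -- done
  · rintro ⟨a, ha, rfl⟩
    refine ⟨a, fun i => ?_, rfl⟩
    rcases ha i (Set.mem_univ i) with h | ⟨m, h⟩
    · exact Or.inl h
    · exact Or.inr ⟨m + 1, by omega, by push_cast [← h]; ring⟩
end

section
/- For every n ≥ 1, the set of n-term Egyptian fractions {1/m₁ + ⋯ + 1/mₙ : m₁, …, mₙ positive integers} is nowhere dense in ℝ. -/
/-!
Every sum `1/m₁ + ⋯ + 1/mₙ` lies in the `n`-fold sumset `n • K` of `K = {1/m : m ∈ ℕ}`.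
The set `K` is compact (the junk value `1/0 = 0` supplies its only accumulation point),
so `n • K` is compact, and it is countable. A countable closed subset of `ℝ` has empty interior, hence is nowhere dense.
-/

open Filter Set
open scoped Pointwise

theorem Set.Countable.nsmul_set {M : Type*} [AddMonoid M] {K : Set M} (hK : K.Countable) (n : ℕ) :
    (n • K).Countable := by
  induction n with
  | zero => exact countable_singleton 0
  | succ n ih => simpa only [succ_nsmul, image2_add] using ih.image2 hK (· + ·)

theorem IsCompact.nsmul_set {M : Type*} [AddMonoid M] [TopologicalSpace M] [ContinuousAdd M]
    {K : Set M} (hK : IsCompact K) (n : ℕ) : IsCompact (n • K) := by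
  induction n with
  | zero => exact isCompact_singleton
  | succ n ih => simpa only [succ_nsmul] using ih.add hK

theorem IsClosed.isNowhereDense_of_countable {E : Type*} (𝕜 : Type*) [NontriviallyNormedField 𝕜]
    [CompleteSpace 𝕜] [AddCommGroup E] [Module 𝕜 E] [Nontrivial E] [TopologicalSpace E]
    [ContinuousAdd E] [ContinuousSMul 𝕜 E] {s : Set E} (hs : IsClosed s) (hc : s.Countable) :
    IsNowhereDense s :=
  hs.isNowhereDense_iff.2 (interior_eq_empty_iff_dense_compl.2 (hc.dense_compl 𝕜))

theorem isCompact_range_one_div_natCast {𝕜 : Type*} [DivisionSemiring 𝕜] [CharZero 𝕜]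
    [TopologicalSpace 𝕜] [ContinuousSMul ℚ≥0 𝕜] :
    IsCompact (range fun m : ℕ ↦ (1 : 𝕜) / m) := by
  have h := (tendsto_one_div_atTop_nhds_zero_nat (𝕜 := 𝕜)).isCompact_insert_range
  have h0 : (0 : 𝕜) ∈ range fun m : ℕ ↦ (1 : 𝕜) / m := ⟨0, by simp⟩
  rwa [insert_eq_of_mem h0] at h

theorem stmt_3_general (n : ℕ) :
    IsNowhereDense {x : ℝ | ∃ m : Fin n → ℕ,
      (∀ i, 1 ≤ m i) ∧ x = ∑ i, (1 : ℝ) / (m i)} := by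
  have hK := isCompact_range_one_div_natCast (𝕜 := ℝ)
  refine ((hK.nsmul_set n).isClosed.isNowhereDense_of_countable ℝ
    ((countable_range _).nsmul_set n)).mono ?_
  rintro x ⟨m, -, rfl⟩
  exact mem_nsmul_iff_sum.2 ⟨fun i ↦ 1 / m i, fun i ↦ ⟨m i, rfl⟩, rfl⟩

theorem stmt_3 (n : ℕ) (hn : 1 ≤ n) :
    IsNowhereDense {x : ℝ | ∃ m : Fin n → ℕ,
      (∀ i, 1 ≤ m i) ∧ x = ∑ i, (1 : ℝ) / (m i)} :=
  stmt_3_general n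
end

section
/- Let G be a Hausdorff topological group and let T, E ⊆ G be nowhere dense subsets with T locally cofinite at 0. Then E + T is nowhere dense in G. -/
/-!
Off the closure of `E`, continuity of subtraction at `(y, 0)` yields a neighbourhood `V` of `y` and
a neighbourhood `u` of `0` with `V` disjoint from `E + u`. Hence near `y` the set `E + T` lies in
`E + (T \ u)`, a finite union of translates of `E`, which is nowhere dense. Since such points `y`
are dense, `E + T` is nowhere dense.
-/

open Pointwise

def LCF0 {G : Type*} [AddGroup G] [TopologicalSpace G] (T : Set G) : Prop :=
  (0 : G) ∉ T ∧ ∀ u : Set G, IsOpen u → (0 : G) ∈ u → (T \ u).Finite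

open Filter Topology Set

section NowhereDense

variable {X : Type*} [TopologicalSpace X]

theorem IsNowhereDense.union {s t : Set X} (hs : IsNowhereDense s) (ht : IsNowhereDense t) :
    IsNowhereDense (s ∪ t) := by
  rw [IsNowhereDense, closure_union,
    interior_union_isClosed_of_interior_empty isClosed_closure ht]
  exact hs

theorem Set.Finite.isNowhereDense_biUnion {ι : Type*} {S : Set ι} (hS : S.Finite)
    {f : ι → Set X} (hf : ∀ i ∈ S, IsNowhereDense (f i)) : IsNowhereDense (⋃ i ∈ S, f i) := by
  induction S, hS using Set.Finite.induction_on with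
  | empty => simp
  | @insert a S _ _ ih =>
    rw [biUnion_insert]
    exact (hf a (mem_insert a S)).union (ih fun i hi => hf i (mem_insert_of_mem a hi))

theorem isNowhereDense_of_forall_nhds_inter {s D : Set X} (hD : Dense D)
    (h : ∀ x ∈ D, ∃ V ∈ 𝓝 x, IsNowhereDense (s ∩ V)) : IsNowhereDense s := by
  rw [IsNowhereDense, ← not_nonempty_iff_eq_empty]
  intro hne
  obtain ⟨x, hxW, hxD⟩ := hD.inter_open_nonempty _ isOpen_interior hne
  obtain ⟨V, hV, hsV⟩ := h x hxD
  obtain ⟨O, hOV, hO, hxO⟩ := mem_nhds_iff.mp hV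
  have hWO : interior (closure s) ∩ O ⊆ closure (s ∩ V) :=
    calc interior (closure s) ∩ O ⊆ O ∩ closure s := fun y hy => ⟨hy.2, interior_subset hy.1⟩
      _ ⊆ closure (O ∩ s) := hO.inter_closure
      _ ⊆ closure (s ∩ V) := closure_mono fun y hy => ⟨hy.2, hOV hy.1⟩
  have := interior_maximal hWO (isOpen_interior.inter hO)
  rw [hsV] at this
  exact this ⟨hxW, hxO⟩

end NowhereDense

section AddGroup

variable {G : Type*} [AddGroup G] [TopologicalSpace G]

theorem IsNowhereDense.add_of_finite [SeparatelyContinuousAdd G] {E T : Set G} (hE : IsNowhereDense E) (hT : T.Finite) :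
    IsNowhereDense (E + T) := by
  rw [← iUnion_add_right_image]
  exact hT.isNowhereDense_biUnion fun t _ =>
    (Homeomorph.addRight t).isInducing.isNowhereDense_image hE

theorem exists_nhds_disjoint_add_of_notMem_closure [ContinuousSub G] {E : Set G} {y : G} (hy : y ∉ closure E) :
    ∃ V ∈ 𝓝 y, ∃ u, IsOpen u ∧ (0 : G) ∈ u ∧ Disjoint V (E + u) := by
  have hpre : (fun p : G × G => p.1 - p.2) ⁻¹' (closure E)ᶜ ∈ 𝓝 (y, (0 : G)) :=
    continuous_sub.continuousAt.preimage_mem_nhds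
      (isClosed_closure.isOpen_compl.mem_nhds (by simpa using hy))
  obtain ⟨V, u, hV, hyV, hu, h0u, hVu⟩ := mem_nhds_prod_iff'.mp hpre
  refine ⟨V, hV.mem_nhds hyV, u, hu, h0u, disjoint_left.mpr ?_⟩
  rintro _ hv ⟨e, he, t, ht, rfl⟩
  exact hVu (mk_mem_prod hv ht) (by simpa using subset_closure he)

end AddGroup

theorem stmt_6_general {G : Type*} [AddGroup G] [TopologicalSpace G] [IsTopologicalAddGroup G]
    (T E : Set G) (hEnwd : IsNowhereDense E)
    (hT : LCF0 T) : IsNowhereDense (E + T) := by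
  refine isNowhereDense_of_forall_nhds_inter (interior_eq_empty_iff_dense_compl.mp hEnwd)
    fun y hy => ?_
  obtain ⟨V, hV, u, hu, h0u, hVu⟩ := exists_nhds_disjoint_add_of_notMem_closure hy
  refine ⟨V, hV, (hEnwd.add_of_finite (hT.2 u hu h0u)).mono ?_⟩
  rintro _ ⟨⟨e, he, t, ht, rfl⟩, hv⟩
  by_cases htu : t ∈ u
  · exact absurd (add_mem_add he htu) (disjoint_left.mp hVu hv)
  · exact add_mem_add he ⟨ht, htu⟩

theorem stmt_6 {G : Type*} [AddGroup G] [TopologicalSpace G] [IsTopologicalAddGroup G]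
    [T2Space G] (T E : Set G) (hTnwd : IsNowhereDense T) (hEnwd : IsNowhereDense E)
    (hT : LCF0 T) : IsNowhereDense (E + T) :=
  stmt_6_general T E hEnwd hT
end

section
/- Let G be a Hausdorff topological group and T₁, T₂, T₃ ⊆ G each locally cofinite at 0. Let g ∈ T₁ + T₂ + T₃ with g ≠ 0 and g ∉ T₁ ∪ T₂ ∪ T₃. Then g has only finitely many representations: the set {(g₁, g₂, g₃) ∈ T₁ × T₂ × T₃ : g₁ + g₂ + g₃ = g} is finite. -/
theorem exists_open_nhds_zero_forall_add_add_ne {M : Type*} [AddMonoid M] [TopologicalSpace M]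
    [ContinuousAdd M] [T1Space M] {g : M} (hg : g ≠ 0) :
    ∃ u : Set M, IsOpen u ∧ (0 : M) ∈ u ∧ ∀ x ∈ u, ∀ y ∈ u, ∀ z ∈ u, x + y + z ≠ g := by
  obtain ⟨V, hV, hVg⟩ := exists_nhds_zero_quarter (isOpen_compl_singleton.mem_nhds hg.symm)
  obtain ⟨u, huV, huo, h0u⟩ := mem_nhds_iff.mp hV
  refine ⟨u, huo, h0u, fun x hx y hy z hz => ?_⟩
  simpa using hVg (huV hx) (huV hy) (huV hz) (mem_of_mem_nhds hV)

section LCF0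

variable {G : Type*} [AddGroup G] [TopologicalSpace G]

theorem LCF0.finite_inter_preimage [T2Space G] {T T' : Set G} (hT : LCF0 T) (hT' : LCF0 T')
    {φ : G → G} (hφ : Continuous φ) (hinj : φ.Injective) (hφ0 : φ 0 ≠ 0) :
    (T ∩ φ ⁻¹' T').Finite := by
  obtain ⟨W, u, hWo, huo, hφW, h0u, hWu⟩ := t2_separation hφ0
  have hnear : (φ ⁻¹' (T' \ u)).Finite := (hT'.2 u huo h0u).preimage hinj.injOn
  refine ((hT.2 _ (hWo.preimage hφ) hφW).union hnear).subset ?_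
  rintro x ⟨hxT, hxT'⟩
  by_cases hxW : φ x ∈ W
  · exact Or.inr ⟨hxT', Set.disjoint_left.mp hWu hxW⟩
  · exact Or.inl ⟨hxT, hxW⟩

def representations (T₁ T₂ T₃ : Set G) (g : G) : Set (G × G × G) :=
  {p | p.1 ∈ T₁ ∧ p.2.1 ∈ T₂ ∧ p.2.2 ∈ T₃ ∧ p.1 + p.2.1 + p.2.2 = g}

variable [IsTopologicalAddGroup G] [T2Space G] {T₁ T₂ T₃ : Set G} {g : G}

theorem finite_representations_fst_eq (h₂ : LCF0 T₂) (h₃ : LCF0 T₃) {a : G} (hag : a ≠ g) :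
    {p ∈ representations T₁ T₂ T₃ g | p.1 = a}.Finite := by
  have hfin := h₂.finite_inter_preimage h₃ (φ := fun b => -b + (-a + g)) (by fun_prop)
    (fun x y h => by simpa using h) (by simpa [neg_add_eq_zero] using hag)
  refine (hfin.image fun b => (a, b, -b + (-a + g))).subset ?_
  rintro ⟨a, b, c⟩ ⟨⟨-, hb, hc, habc⟩, rfl⟩
  dsimp only at habc
  obtain rfl : c = -b + (-a + g) := by
    rw [eq_neg_add_iff_add_eq, eq_neg_add_iff_add_eq, ← add_assoc, habc]
  exact ⟨b, ⟨hb, hc⟩, rfl⟩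

theorem finite_representations_snd_eq (h₁ : LCF0 T₁) (h₃ : LCF0 T₃) {b : G} (hbg : b ≠ g) :
    {p ∈ representations T₁ T₂ T₃ g | p.2.1 = b}.Finite := by
  have hfin := h₁.finite_inter_preimage h₃ (φ := fun a => -(a + b) + g) (by fun_prop)
    (fun x y h => by simpa using h) (by simpa [neg_add_eq_zero] using hbg)
  refine (hfin.image fun a => (a, b, -(a + b) + g)).subset ?_
  rintro ⟨a, b, c⟩ ⟨⟨ha, -, hc, habc⟩, rfl⟩
  dsimp only at habc
  obtain rfl : c = -(a + b) + g := by rw [eq_neg_add_iff_add_eq, habc]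
  exact ⟨a, ⟨ha, hc⟩, rfl⟩

theorem finite_representations_thd_eq (h₁ : LCF0 T₁) (h₂ : LCF0 T₂) {c : G} (hcg : c ≠ g) :
    {p ∈ representations T₁ T₂ T₃ g | p.2.2 = c}.Finite := by
  have hfin := h₁.finite_inter_preimage h₂ (φ := fun a => -a + (g - c)) (by fun_prop)
    (fun x y h => by simpa using h) (by simpa [sub_eq_zero] using hcg.symm)
  refine (hfin.image fun a => (a, -a + (g - c), c)).subset ?_
  rintro ⟨a, b, c⟩ ⟨⟨ha, hb, -, habc⟩, rfl⟩
  dsimp only at habc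
  obtain rfl : b = -a + (g - c) := by
    rw [eq_neg_add_iff_add_eq, eq_sub_iff_add_eq, habc]
  exact ⟨a, ⟨ha, hb⟩, rfl⟩

end LCF0

theorem stmt_8_general {G : Type*} [AddGroup G] [TopologicalSpace G] [IsTopologicalAddGroup G]
    [T2Space G] (T₁ T₂ T₃ : Set G) (h₁ : LCF0 T₁) (h₂ : LCF0 T₂) (h₃ : LCF0 T₃)
    (g : G) (hg0 : g ≠ 0) (hgT : g ∉ T₁ ∪ T₂ ∪ T₃) :
    {p : G × G × G | p.1 ∈ T₁ ∧ p.2.1 ∈ T₂ ∧ p.2.2 ∈ T₃ ∧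
      p.1 + p.2.1 + p.2.2 = g}.Finite := by
  simp only [Set.mem_union, not_or] at hgT
  obtain ⟨⟨hg₁, hg₂⟩, hg₃⟩ := hgT
  obtain ⟨u, huo, h0u, hu⟩ := exists_open_nhds_zero_forall_add_add_ne hg0
  have fin₁ := (h₁.2 u huo h0u).biUnion fun a ha =>
    finite_representations_fst_eq (T₁ := T₁) (g := g) h₂ h₃ (ne_of_mem_of_not_mem ha.1 hg₁)
  have fin₂ := (h₂.2 u huo h0u).biUnion fun b hb =>
    finite_representations_snd_eq (T₂ := T₂) (g := g) h₁ h₃ (ne_of_mem_of_not_mem hb.1 hg₂)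
  have fin₃ := (h₃.2 u huo h0u).biUnion fun c hc =>
    finite_representations_thd_eq (T₃ := T₃) (g := g) h₁ h₂ (ne_of_mem_of_not_mem hc.1 hg₃)
  refine ((fin₁.union fin₂).union fin₃).subset fun p hp => ?_
  obtain ⟨ha, hb, hc, habc⟩ := id hp
  simp only [Set.mem_union, Set.mem_iUnion, Set.mem_sdiff]
  by_cases hau : p.1 ∈ u
  · by_cases hbu : p.2.1 ∈ u
    · by_cases hcu : p.2.2 ∈ u
      · exact absurd habc (hu _ hau _ hbu _ hcu)
      · exact .inr ⟨p.2.2, ⟨hc, hcu⟩, hp, rfl⟩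
    · exact .inl (.inr ⟨p.2.1, ⟨hb, hbu⟩, hp, rfl⟩)
  · exact .inl (.inl ⟨p.1, ⟨ha, hau⟩, hp, rfl⟩)

theorem stmt_8 {G : Type*} [AddGroup G] [TopologicalSpace G] [IsTopologicalAddGroup G]
    [T2Space G] (T₁ T₂ T₃ : Set G) (h₁ : LCF0 T₁) (h₂ : LCF0 T₂) (h₃ : LCF0 T₃)
    (g : G) (hg : ∃ g₁ ∈ T₁, ∃ g₂ ∈ T₂, ∃ g₃ ∈ T₃, g₁ + g₂ + g₃ = g)
    (hg0 : g ≠ 0) (hgT : g ∉ T₁ ∪ T₂ ∪ T₃) :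
    {p : G × G × G | p.1 ∈ T₁ ∧ p.2.1 ∈ T₂ ∧ p.2.2 ∈ T₃ ∧
      p.1 + p.2.1 + p.2.2 = g}.Finite :=
  stmt_8_general T₁ T₂ T₃ h₁ h₂ h₃ g hg0 hgT
end

section
/- Let n ≥ 1 and let q > 0 be a rational number that is not a unit fraction, i.e. q ∉ {1/m : m ≥ 1}. Then the set {(m₁, m₂, m₃) ∈ ℕ³ : mᵢ ≥ 1, 1/m₁ + 1/m₂ + 1/m₃ = q} is finite. -/
private lemma uf_bound {x : ℕ} {q k : ℚ} (hq : 0 < q) (hx : 1 ≤ x) (h : q ≤ k / x) :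
    x ≤ ⌈k / q⌉₊ := by
  have hx' : (0 : ℚ) < x := by exact_mod_cast hx
  have h1 : q * x ≤ k := (le_div_iff₀ hx').mp h
  have h2 : (x : ℚ) ≤ k / q := by rw [le_div_iff₀ hq]; linarith
  have h3 : (x : ℚ) ≤ (⌈k / q⌉₊ : ℚ) := h2.trans (Nat.le_ceil _)
  exact_mod_cast h3

private lemma uf_one (q : ℚ) : {a : ℕ | 1 ≤ a ∧ (1 / a : ℚ) = q}.Finite := by
  apply Set.Subsingleton.finite
  rintro a ⟨ha, hae⟩ b ⟨hb, hbe⟩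
  have ha' : (0 : ℚ) < a := by exact_mod_cast ha
  have hb' : (0 : ℚ) < b := by exact_mod_cast hb
  have h : (1 / a : ℚ) = 1 / b := hae.trans hbe.symm
  field_simp at h
  exact_mod_cast (by linarith : (a : ℚ) = b)

private lemma uf_two (q : ℚ) :
    {p : ℕ × ℕ | 1 ≤ p.1 ∧ 1 ≤ p.2 ∧ (1 / p.1 + 1 / p.2 : ℚ) = q}.Finite := by
  rcases le_or_gt q 0 with h | hq
  · convert Set.finite_empty
    ext ⟨b, c⟩
    simp only [Set.mem_setOf_eq, Set.mem_empty_iff_false, iff_false, not_and]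
    intro hb hc
    have hb' : (0 : ℚ) < b := by exact_mod_cast hb
    have hc' : (0 : ℚ) < c := by exact_mod_cast hc
    have hb1 : (0 : ℚ) < 1 / b := by positivity
    have hc1 : (0 : ℚ) < 1 / c := by positivity
    intro he
    linarith
  · set N := ⌈(2 : ℚ) / q⌉₊ with hN
    apply Set.Finite.subset (s := (⋃ b ∈ Set.Iic N, {b} ×ˢ {c : ℕ | 1 ≤ c ∧ (1 / c : ℚ) = q - 1 / b}) ∪
      (⋃ c ∈ Set.Iic N, {b : ℕ | 1 ≤ b ∧ (1 / b : ℚ) = q - 1 / c} ×ˢ {c}))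
    · apply Set.Finite.union
      · exact Set.Finite.biUnion (Set.finite_Iic N) fun b _ =>
          (Set.finite_singleton b).prod (uf_one _)
      · exact Set.Finite.biUnion (Set.finite_Iic N) fun c _ =>
          (uf_one _).prod (Set.finite_singleton c)
    · rintro ⟨b, c⟩ ⟨hb, hc, he⟩
      have hb' : (0 : ℚ) < b := by exact_mod_cast hb
      have hc' : (0 : ℚ) < c := by exact_mod_cast hc
      have hb1 : (0 : ℚ) < 1 / b := by positivity
      have hc1 : (0 : ℚ) < 1 / c := by positivity
      rcases le_total (1 / (c : ℚ)) (1 / b) with hle | hle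
      · left
        have hqb : q ≤ 2 / b := by
          have : (2 : ℚ) / b = 1 / b + 1 / b := by ring
          linarith
        refine Set.mem_biUnion (uf_bound hq hb hqb) ?_
        exact ⟨rfl, hc, by linarith⟩
      · right
        have hqc : q ≤ 2 / c := by
          have : (2 : ℚ) / c = 1 / c + 1 / c := by ring
          linarith
        refine Set.mem_biUnion (uf_bound hq hc hqc) ?_
        exact ⟨⟨hb, by linarith⟩, rfl⟩

theorem stmt_9 (q : ℚ) (hq : 0 < q) (hunit : ¬∃ m : ℕ, 1 ≤ m ∧ q = 1 / m) :
    {p : ℕ × ℕ × ℕ | 1 ≤ p.1 ∧ 1 ≤ p.2.1 ∧ 1 ≤ p.2.2 ∧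
      (1 / p.1 + 1 / p.2.1 + 1 / p.2.2 : ℚ) = q}.Finite := by
  set N := ⌈(3 : ℚ) / q⌉₊ with hN
  apply Set.Finite.subset (s :=
    (⋃ a ∈ Set.Iic N, {a} ×ˢ {p : ℕ × ℕ | 1 ≤ p.1 ∧ 1 ≤ p.2 ∧ (1 / p.1 + 1 / p.2 : ℚ) = q - 1 / a}) ∪
    (⋃ b ∈ Set.Iic N, (fun p : ℕ × ℕ => (p.1, b, p.2)) ''
      {p : ℕ × ℕ | 1 ≤ p.1 ∧ 1 ≤ p.2 ∧ (1 / p.1 + 1 / p.2 : ℚ) = q - 1 / b}) ∪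
    (⋃ c ∈ Set.Iic N, (fun p : ℕ × ℕ => (p.1, p.2, c)) ''
      {p : ℕ × ℕ | 1 ≤ p.1 ∧ 1 ≤ p.2 ∧ (1 / p.1 + 1 / p.2 : ℚ) = q - 1 / c}))
  · refine Set.Finite.union (Set.Finite.union ?_ ?_) ?_
    · exact Set.Finite.biUnion (Set.finite_Iic N) fun a _ =>
        (Set.finite_singleton a).prod (uf_two _)
    · exact Set.Finite.biUnion (Set.finite_Iic N) fun b _ => (uf_two _).image _
    · exact Set.Finite.biUnion (Set.finite_Iic N) fun c _ => (uf_two _).image _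
  · rintro ⟨a, b, c⟩ ⟨ha, hb, hc, he⟩
    have ha' : (0 : ℚ) < a := by exact_mod_cast ha
    have hb' : (0 : ℚ) < b := by exact_mod_cast hb
    have hc' : (0 : ℚ) < c := by exact_mod_cast hc
    have ha1 : (0 : ℚ) < 1 / a := by positivity
    have hb1 : (0 : ℚ) < 1 / b := by positivity
    have hc1 : (0 : ℚ) < 1 / c := by positivity
    have ea : (3 : ℚ) / a = 3 * (1 / a) := by ring
    have eb : (3 : ℚ) / b = 3 * (1 / b) := by ring
    have ec : (3 : ℚ) / c = 3 * (1 / c) := by ring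
    have hcase : q ≤ 3 / (a : ℚ) ∨ q ≤ 3 / (b : ℚ) ∨ q ≤ 3 / (c : ℚ) := by
      by_contra h
      push_neg at h
      obtain ⟨h1, h2, h3⟩ := h
      linarith
    rcases hcase with h | h | h
    · left; left
      exact Set.mem_biUnion (uf_bound hq ha h) ⟨rfl, hb, hc, by linarith⟩
    · left; right
      exact Set.mem_biUnion (uf_bound hq hb h) ⟨(a, c), ⟨ha, hc, by linarith⟩, rfl⟩
    · right
      exact Set.mem_biUnion (uf_bound hq hc h) ⟨(a, b), ⟨ha, hb, by linarith⟩, rfl⟩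
end

section
/- Let G be a Hausdorff topological group equipped with a partial order ≤ compatible with the group operation (a ≤ b and c ≤ d imply a + c ≤ b + d), and let T₁, …, Tₙ be subsets of the positive cone {g : 0 < g} each locally cofinite at 0. Then every g ∈ G has only finitely many representations as g = t₁ + ⋯ + tₙ with tᵢ ∈ Tᵢ; i.e., {(t₁,…,tₙ) ∈ T₁ × ⋯ × Tₙ : t₁ + ⋯ + tₙ = g} is finite. -/
/-!
Each `T i ∪ {0}` is compact, since `T i` can only accumulate at `0`. If `g` had infinitely many
representations, they would accumulate at some `ω` in the product of these compact sets, and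
`ω` again sums to `g`. Near `ω`, a representation `t` agrees with `ω` in every coordinate where
`ω i ≠ 0` (those points are isolated in `T i`) and satisfies `0 < t i` where `ω i = 0`.
So a representation `t ≠ ω` near `ω` satisfies `ω ≤ t` coordinatewise with `ω ≠ t`, whence
`g = ∑ ω < ∑ t = g`.
-/

open Filter Topology Set

namespace LCF0

variable {G : Type*} [AddGroup G] [TopologicalSpace G] {T : Set G}

lemma tendsto_coe_cofinite (h : LCF0 T) : Tendsto ((↑) : T → G) cofinite (𝓝 0) := by
  intro u hu
  obtain ⟨v, hvu, hv, h0v⟩ := mem_nhds_iff.1 hu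
  refine ((h.2 v hv h0v).preimage Subtype.val_injective.injOn).subset fun x hx => ?_
  exact ⟨x.2, fun hxv => hx (hvu hxv)⟩

lemma isCompact_insert_zero (h : LCF0 T) : IsCompact (insert 0 T) := by
  simpa using h.tendsto_coe_cofinite.isCompact_insert_range_of_cofinite

lemma eventually_eq_of_mem [T2Space G] (h : LCF0 T) {t : G} (ht : t ∈ T) :
    ∀ᶠ y in 𝓝 t, y ∈ T → y = t := by
  obtain ⟨v, u, hv, hu, htv, h0u, hvu⟩ := t2_separation (ne_of_mem_of_not_mem ht h.1)
  have hfin : ((T \ u) \ {t}).Finite := (h.2 u hu h0u).sdiff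
  filter_upwards [hv.mem_nhds htv, hfin.isClosed.compl_mem_nhds fun hx => hx.2 rfl]
    with y hyv hyF hyT
  by_contra hyt
  exact hyF ⟨⟨hyT, disjoint_left.1 hvu hyv⟩, hyt⟩

lemma eventually_le_of_mem_insert [T2Space G] [Preorder G] (h : LCF0 T)
    (hnonneg : ∀ y ∈ T, 0 ≤ y) {x : G} (hx : x ∈ insert 0 T) :
    ∀ᶠ y in 𝓝 x, y ∈ T → x ≤ y := by
  rcases hx with rfl | hx
  · exact Eventually.of_forall hnonneg
  · filter_upwards [h.eventually_eq_of_mem hx] with y hy hyT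
    exact (hy hyT).ge

end LCF0

section OrderedSum

variable {G : Type*} [AddGroup G]

lemma List.sum_ofFn_lt_sum_ofFn [PartialOrder G] [AddLeftMono G] [AddRightMono G] {n : ℕ}
    {a b : Fin n → G} (hle : ∀ i, a i ≤ b i) (hne : a ≠ b) :
    (List.ofFn a).sum < (List.ofFn b).sum := by
  obtain ⟨i, hi⟩ := Function.ne_iff.1 hne
  simp only [List.ofFn_eq_map]
  exact List.sum_lt_sum a b (fun j _ => hle j) ⟨i, List.mem_finRange i, (hle i).lt_of_ne hi⟩

lemma continuous_sum_ofFn [TopologicalSpace G] [ContinuousAdd G] (n : ℕ) :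
    Continuous fun t : Fin n → G => (List.ofFn t).sum := by
  simp only [List.ofFn_eq_map]
  exact continuous_list_sum _ fun i _ => continuous_apply i

end OrderedSum

theorem stmt_10 {G : Type*} [AddGroup G] [TopologicalSpace G] [IsTopologicalAddGroup G]
    [T2Space G] [PartialOrder G]
    (hcompat : ∀ a b c d : G, a ≤ b → c ≤ d → a + c ≤ b + d)
    (n : ℕ) (T : Fin n → Set G) (hT : ∀ i, LCF0 (T i))
    (hTpos : ∀ i, T i ⊆ {g : G | 0 < g}) (g : G) :
    {t : Fin n → G | (∀ i, t i ∈ T i) ∧ (List.ofFn t).sum = g}.Finite := by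
  have : AddLeftMono G := ⟨fun _ _ _ h => hcompat _ _ _ _ le_rfl h⟩
  have : AddRightMono G := ⟨fun _ _ _ h => hcompat _ _ _ _ h le_rfl⟩
  by_contra hinf
  obtain ⟨ω, hωK, hacc⟩ := Set.Infinite.exists_accPt_of_subset_isCompact hinf
    (isCompact_univ_pi fun i => (hT i).isCompact_insert_zero)
    fun t ht i _ => mem_insert_of_mem 0 (ht.1 i)
  rw [accPt_iff_frequently] at hacc
  have hωsum : (List.ofFn ω).sum = g :=
    (isClosed_eq (continuous_sum_ofFn n) continuous_const).mem_of_frequently_of_tendsto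
      (hacc.mono fun _ ht => ht.2.2) tendsto_id
  have hle : ∀ᶠ t in 𝓝 ω, ∀ i, t i ∈ T i → ω i ≤ t i := eventually_all.2 fun i =>
    (continuous_apply i).continuousAt.eventually <|
      (hT i).eventually_le_of_mem_insert (fun y hy => (hTpos i hy).le) (hωK i trivial)
  obtain ⟨t, ⟨htω, htT, htsum⟩, hωt⟩ := (hacc.and_eventually hle).exists
  have hlt := List.sum_ofFn_lt_sum_ofFn (fun i => hωt i (htT i)) htω.symm
  exact hlt.ne (hωsum.trans htsum.symm)
end

section
/- Let G be a Hausdorff topological group with a partial order ≤ compatible with the group operation and respecting the topology (for every g ∈ G the set {x : x < g} is open). Let T₁, …, Tₙ be subsets of the positive cone each locally cofinite at 0, and let Eₙ = T₁ + ⋯ + Tₙ. Then every infinite subset S of Eₙ contains a strictly decreasing sequence. -/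
open Filter Topology

theorem exists_seq_lt_of_forall_infinite {α : Type*} [LT α] {S : Set α} (hS : S.Infinite)
    (h : ∀ A ⊆ S, A.Infinite → ∃ s ∈ A, (A ∩ {x | x < s}).Infinite) :
    ∃ f : ℕ → α, (∀ k, f k ∈ S) ∧ ∀ k, f (k + 1) < f k := by
  have : Nonempty α := hS.nonempty.to_type
  choose! sel hsel_mem hsel_inf using h
  set A : ℕ → Set α := fun k => (fun B => B ∩ {x | x < sel B})^[k] S
  have hA_succ (k : ℕ) : A (k + 1) = A k ∩ {x | x < sel (A k)} :=
    Function.iterate_succ_apply' _ k S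
  have hA (k : ℕ) : A k ⊆ S ∧ (A k).Infinite := by
    induction k with
    | zero => exact ⟨subset_rfl, hS⟩
    | succ k ih =>
      rw [hA_succ]
      exact ⟨Set.inter_subset_left.trans ih.1, hsel_inf _ ih.1 ih.2⟩
  refine ⟨fun k => sel (A k), fun k => (hA k).1 (hsel_mem _ (hA k).1 (hA k).2), fun k => ?_⟩
  have h_mem := hsel_mem _ (hA (k + 1)).1 (hA (k + 1)).2
  exact (Set.ext_iff.1 (hA_succ k) _ |>.1 h_mem).2

section Sumset

variable {G : Type*} [AddGroup G] [TopologicalSpace G]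

/-- The set `Eₙ = T₁ + ⋯ + Tₙ`. -/
def sumset {n : ℕ} (T : Fin n → Set G) : Set G :=
  {g | ∃ t : Fin n → G, (∀ i, t i ∈ T i) ∧ (List.ofFn t).sum = g}

theorem LCF0.eq_pure_or_le_nhds_zero {T : Set G} (hT : LCF0 T) {𝒰 : Ultrafilter G}
    (hT𝒰 : T ∈ 𝒰) : (∃ a, 𝒰 = pure a) ∨ ↑𝒰 ≤ 𝓝 (0 : G) := by
  refine or_iff_not_imp_right.2 fun h => ?_
  obtain ⟨s, hs, hs𝒰⟩ := Filter.not_le.1 h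
  obtain ⟨u, hus, hu, hu0⟩ := mem_nhds_iff.1 hs
  have hu𝒰 : uᶜ ∈ 𝒰 :=
    Ultrafilter.compl_mem_iff_notMem.2 fun hu𝒰 => hs𝒰 (mem_of_superset hu𝒰 hus)
  obtain ⟨a, -, h𝒰⟩ := Ultrafilter.eq_pure_of_finite_mem (hT.2 u hu hu0) (sdiff_mem hT𝒰 hu𝒰)
  exact ⟨a, h𝒰⟩

section Preorder

variable [Preorder G]

theorem LCF0.exists_le_nhds_eventually_le {T : Set G} (hT : LCF0 T) (hT_nonneg : ∀ x ∈ T, 0 ≤ x)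
    {𝒰 : Ultrafilter G} (hT𝒰 : T ∈ 𝒰) : ∃ c, ↑𝒰 ≤ 𝓝 c ∧ ∀ᶠ x in (𝒰 : Filter G), c ≤ x := by
  rcases hT.eq_pure_or_le_nhds_zero hT𝒰 with ⟨a, rfl⟩ | h
  · exact ⟨a, pure_le_nhds a, by simp⟩
  · exact ⟨0, h, mem_of_superset hT𝒰 hT_nonneg⟩

variable [ContinuousAdd G] [AddLeftMono G] [AddRightMono G]

theorem exists_le_nhds_eventually_le_of_sumset_mem {n : ℕ} {T : Fin n → Set G}
    (hT : ∀ i, LCF0 (T i)) (hT_nonneg : ∀ i, ∀ x ∈ T i, 0 ≤ x) {𝒰 : Ultrafilter G}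
    (hE : sumset T ∈ 𝒰) : ∃ c, ↑𝒰 ≤ 𝓝 c ∧ ∀ᶠ x in (𝒰 : Filter G), c ≤ x := by
  choose! t ht_mem ht_sum using fun g (hg : g ∈ sumset T) => hg
  have hcoord (i : Fin n) :
      ∃ c, ↑(𝒰.map (t · i)) ≤ 𝓝 c ∧ ∀ᶠ x in (𝒰.map (t · i) : Filter G), c ≤ x :=
    (hT i).exists_le_nhds_eventually_le (hT_nonneg i)
      (Ultrafilter.mem_map.2 <| mem_of_superset hE fun g hg => ht_mem g hg i)
  choose c hc_lim hc_le using hcoord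
  refine ⟨(List.ofFn c).sum, ?_, ?_⟩
  · have h_lim : Tendsto (fun g => (List.ofFn (t g)).sum) 𝒰 (𝓝 (List.ofFn c).sum) := by
      simp only [List.ofFn_eq_map]
      exact tendsto_list_sum _ fun i _ => hc_lim i
    exact h_lim.congr' (mem_of_superset hE ht_sum)
  · filter_upwards [hE, eventually_all.2 hc_le] with g hg hle
    rw [← ht_sum g hg, List.ofFn_eq_map, List.ofFn_eq_map]
    exact List.sum_le_sum fun i _ => hle i

end Preorder

variable [PartialOrder G] [ContinuousAdd G] [AddLeftMono G] [AddRightMono G]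

theorem exists_mem_infinite_lt_of_subset_sumset (hopen : ∀ g : G, IsOpen {x : G | x < g})
    {n : ℕ} {T : Fin n → Set G} (hT : ∀ i, LCF0 (T i)) (hT_nonneg : ∀ i, ∀ x ∈ T i, 0 ≤ x)
    {S : Set G} (hS : S ⊆ sumset T) (hS_inf : S.Infinite) :
    ∃ s ∈ S, (S ∩ {x | x < s}).Infinite := by
  have := hS_inf.cofinite_inf_principal_neBot
  set 𝒰 := Ultrafilter.of (cofinite ⊓ 𝓟 S)
  have h𝒰_cofinite : (𝒰 : Filter G) ≤ cofinite := (Ultrafilter.of_le _).trans inf_le_left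
  have hS𝒰 : S ∈ 𝒰 := Ultrafilter.of_le _ (mem_inf_of_right (mem_principal_self S))
  obtain ⟨c, hc_lim, hc_le⟩ :=
    exists_le_nhds_eventually_le_of_sumset_mem hT hT_nonneg (mem_of_superset hS𝒰 hS)
  have hc_lt : ∀ᶠ x in (𝒰 : Filter G), c < x := by
    filter_upwards [hc_le, h𝒰_cofinite (Set.finite_singleton c).compl_mem_cofinite]
      with x hle hne
    exact lt_of_le_of_ne' hle hne
  obtain ⟨s, hsS, hcs⟩ := (Filter.Eventually.and hS𝒰 hc_lt).exists
  have hS_lt : S ∩ {x | x < s} ∈ (𝒰 : Filter G) :=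
    inter_mem hS𝒰 (hc_lim ((hopen s).mem_nhds hcs))
  exact ⟨s, hsS, frequently_cofinite_mem_iff_infinite.1
    (Eventually.frequently hS_lt |>.filter_mono h𝒰_cofinite)⟩

end Sumset

theorem stmt_12_general {G : Type*} [AddGroup G] [TopologicalSpace G] [IsTopologicalAddGroup G]
    [PartialOrder G]
    (hcompat : ∀ a b c d : G, a ≤ b → c ≤ d → a + c ≤ b + d)
    (hopen : ∀ g : G, IsOpen {x : G | x < g})
    (n : ℕ) (T : Fin n → Set G) (hT : ∀ i, LCF0 (T i))
    (hTpos : ∀ i, T i ⊆ {g : G | 0 < g})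
    (S : Set G)
    (hS : S ⊆ {g : G | ∃ t : Fin n → G, (∀ i, t i ∈ T i) ∧ (List.ofFn t).sum = g})
    (hSinf : S.Infinite) :
    ∃ f : ℕ → G, (∀ k, f k ∈ S) ∧ ∀ k, f (k + 1) < f k := by
  have : AddLeftMono G := ⟨fun _ _ _ h => hcompat _ _ _ _ le_rfl h⟩
  have : AddRightMono G := ⟨fun _ _ _ h => hcompat _ _ _ _ h le_rfl⟩
  refine exists_seq_lt_of_forall_infinite hSinf fun A hA hA_inf => ?_
  exact exists_mem_infinite_lt_of_subset_sumset hopen hT (fun i _ hx => (hTpos i hx).le)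
    (hA.trans hS) hA_inf

theorem stmt_12 {G : Type*} [AddGroup G] [TopologicalSpace G] [IsTopologicalAddGroup G]
    [T2Space G] [PartialOrder G]
    (hcompat : ∀ a b c d : G, a ≤ b → c ≤ d → a + c ≤ b + d)
    (hopen : ∀ g : G, IsOpen {x : G | x < g})
    (n : ℕ) (T : Fin n → Set G) (hT : ∀ i, LCF0 (T i))
    (hTpos : ∀ i, T i ⊆ {g : G | 0 < g})
    (S : Set G)
    (hS : S ⊆ {g : G | ∃ t : Fin n → G, (∀ i, t i ∈ T i) ∧ (List.ofFn t).sum = g})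
    (hSinf : S.Infinite) :
    ∃ f : ℕ → G, (∀ k, f k ∈ S) ∧ ∀ k, f (k + 1) < f k :=
  stmt_12_general hcompat hopen n T hT hTpos S hS hSinf
end

section
/- Let G be a Hausdorff topological group with a partial order ≤ compatible with the group operation such that {x : x < g} is open for every g ∈ G, and let T₁, …, Tₙ be LCF0 subsets of the positive cone. Then there is no strictly increasing sequence in Eₙ = T₁ + ⋯ + Tₙ; i.e., no function f : ℕ → Eₙ with f(k) < f(k+1) for all k. -/
/-!
Write a strictly increasing sequence in `T₁ + ⋯ + Tₙ` as `f k = ∑ᵢ t k i` with `t k i ∈ Tᵢ`.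
Since `Tᵢ \ u` is finite for every neighbourhood `u` of `0`, a sequence in `Tᵢ` either takes some
value infinitely often or tends to `0`; passing to a subsequence once per coordinate, every
coordinate is constant `cᵢ` or tends to `cᵢ = 0`. Not all coordinates can be constant, as `f` is
injective, so `s = ∑ᵢ cᵢ` is strictly below every term of the subsequence, which converges to
`s`. But then the open set `{x | x < f k}` around `s` must contain later terms, which are `≥ f k`.
-/

open Filter Topology

theorem exists_strictMono_forall_of_exists_subseq {ι α : Type*} [Finite ι] (S : ι → Set α)
    (P : ι → (ℕ → α) → Prop) (hP : ∀ i b φ, P i b → StrictMono φ → P i (b ∘ φ))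
    (hS : ∀ i (b : ℕ → α), (∀ m, b m ∈ S i) → ∃ φ, StrictMono φ ∧ P i (b ∘ φ))
    (a : ℕ → ι → α) (ha : ∀ m i, a m i ∈ S i) :
    ∃ φ : ℕ → ℕ, StrictMono φ ∧ ∀ i, P i (fun m => a (φ m) i) := by
  classical
  have key (s : Finset ι) : ∃ φ : ℕ → ℕ, StrictMono φ ∧ ∀ i ∈ s, P i (fun m => a (φ m) i) := by
    induction s using Finset.induction_on with
    | empty => exact ⟨id, strictMono_id, by simp⟩
    | insert j s _ ih =>
      obtain ⟨φ, hφ, hPφ⟩ := ih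
      obtain ⟨ψ, hψ, hPψ⟩ := hS j (fun m => a (φ m) j) (fun m => ha _ _)
      refine ⟨φ ∘ ψ, hφ.comp hψ, (Finset.forall_mem_insert _ _ _).2 ⟨hPψ, fun i hi => ?_⟩⟩
      exact hP i _ ψ (hPφ i hi) hψ
  cases nonempty_fintype ι
  simpa using key Finset.univ

theorem Monotone.not_lt_of_tendsto {α : Type*} [Preorder α] [TopologicalSpace α] {g : ℕ → α}
    (hg : Monotone g) {s : α} (hs : Tendsto g atTop (𝓝 s)) {k : ℕ}
    (hk : IsOpen {x | x < g k}) : ¬s < g k := by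
  intro hlt
  obtain ⟨m, hm, hkm⟩ := ((hs.eventually (hk.mem_nhds hlt)).and (eventually_ge_atTop k)).exists
  exact lt_irrefl _ (hm.trans_le (hg hkm))

section ConstOrTendstoZero

variable {G : Type*} [AddGroup G] [TopologicalSpace G]

def ConstOrTendstoZero (b : ℕ → G) (c : G) : Prop :=
  (∀ m, b m = c) ∨ (c = 0 ∧ Tendsto b atTop (𝓝 0))

theorem ConstOrTendstoZero.comp {b : ℕ → G} {c : G} (h : ConstOrTendstoZero b c)
    {φ : ℕ → ℕ} (hφ : StrictMono φ) : ConstOrTendstoZero (b ∘ φ) c :=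
  h.imp (fun h m => h (φ m)) (And.imp_right fun h => h.comp hφ.tendsto_atTop)

theorem ConstOrTendstoZero.tendsto {b : ℕ → G} {c : G} (h : ConstOrTendstoZero b c) :
    Tendsto b atTop (𝓝 c) := by
  rcases h with hconst | ⟨rfl, hlim⟩
  · simpa only [funext hconst] using tendsto_const_nhds
  · exact hlim

theorem ConstOrTendstoZero.le [Preorder G] {b : ℕ → G} {c : G} (h : ConstOrTendstoZero b c)
    (hpos : ∀ m, 0 < b m) (m : ℕ) : c ≤ b m := by
  rcases h with hconst | ⟨rfl, -⟩
  · exact (hconst m).ge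
  · exact (hpos m).le

theorem LCF0.exists_subseq_constOrTendstoZero {T : Set G} (hT : LCF0 T) {b : ℕ → G}
    (hb : ∀ m, b m ∈ T) : ∃ φ : ℕ → ℕ, StrictMono φ ∧ ∃ c, ConstOrTendstoZero (b ∘ φ) c := by
  by_cases hrep : ∃ x, {m | b m = x}.Infinite
  · obtain ⟨x, hx⟩ := hrep
    have hfreq : ∃ᶠ m in atTop, b m = x := by
      rw [← Nat.cofinite_eq_atTop]
      exact frequently_cofinite_iff_infinite.2 hx
    obtain ⟨φ, hφ, hconst⟩ := extraction_of_frequently_atTop hfreq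
    exact ⟨φ, hφ, x, Or.inl hconst⟩
  · push Not at hrep
    refine ⟨id, strictMono_id, 0, Or.inr ⟨rfl, tendsto_nhds.2 fun u hu h0u => ?_⟩⟩
    rw [← Nat.cofinite_eq_atTop, mem_cofinite]
    refine ((hT.2 u hu h0u).biUnion fun x _ => hrep x).subset fun m hm => ?_
    exact Set.mem_biUnion ⟨hb m, hm⟩ rfl

end ConstOrTendstoZero

theorem stmt_13_general {G : Type*} [AddGroup G] [TopologicalSpace G] [IsTopologicalAddGroup G]
    [PartialOrder G]
    (hcompat : ∀ a b c d : G, a ≤ b → c ≤ d → a + c ≤ b + d)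
    (hopen : ∀ g : G, IsOpen {x : G | x < g})
    (n : ℕ) (T : Fin n → Set G) (hT : ∀ i, LCF0 (T i))
    (hTpos : ∀ i, T i ⊆ {g : G | 0 < g}) :
    ¬∃ f : ℕ → G,
      (∀ k, f k ∈ {g : G | ∃ t : Fin n → G, (∀ i, t i ∈ T i) ∧ (List.ofFn t).sum = g}) ∧
      ∀ k, f k < f (k + 1) := by
  rintro ⟨f, hf, hlt⟩
  have : AddLeftMono G := ⟨fun _ _ _ h => hcompat _ _ _ _ le_rfl h⟩
  have : AddRightMono G := ⟨fun _ _ _ h => hcompat _ _ _ _ h le_rfl⟩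
  have hf_mono : StrictMono f := strictMono_nat_of_lt_succ hlt
  choose t ht hsum using hf
  obtain ⟨φ, hφ, hsub⟩ := exists_strictMono_forall_of_exists_subseq T
    (fun _ b => ∃ c, ConstOrTendstoZero b c) (fun _ _ _ ⟨c, hc⟩ hφ => ⟨c, hc.comp hφ⟩)
    (fun i _ hb => (hT i).exists_subseq_constOrTendstoZero hb) t ht
  choose c hc using hsub
  by_cases hconst : ∀ i m, t (φ m) i = c i
  · refine (hf_mono (hφ zero_lt_one)).ne ?_
    rw [← hsum, ← hsum]
    congr 2
    funext i
    rw [hconst, hconst]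
  push Not at hconst
  obtain ⟨i₀, m₀, hm₀⟩ := hconst
  have hlim : Tendsto (f ∘ φ) atTop (𝓝 (List.ofFn c).sum) := by
    simp only [Function.comp_def, ← hsum, List.ofFn_eq_map]
    exact tendsto_list_sum _ fun i _ => (hc i).tendsto
  have hbelow : (List.ofFn c).sum < f (φ 0) := by
    have hpos : ∀ i m, 0 < t (φ m) i := fun i m => hTpos i (ht _ i)
    have hc₀ : c i₀ = 0 := ((hc i₀).resolve_left fun h => hm₀ (h m₀)).1
    rw [← hsum, List.ofFn_eq_map, List.ofFn_eq_map]
    refine List.sum_lt_sum _ _ (fun i _ => (hc i).le (hpos i) 0) ⟨i₀, List.mem_finRange _, ?_⟩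
    exact hc₀ ▸ hpos i₀ 0
  exact (hf_mono.monotone.comp hφ.monotone).not_lt_of_tendsto hlim (hopen _) hbelow

theorem stmt_13 {G : Type*} [AddGroup G] [TopologicalSpace G] [IsTopologicalAddGroup G]
    [T2Space G] [PartialOrder G]
    (hcompat : ∀ a b c d : G, a ≤ b → c ≤ d → a + c ≤ b + d)
    (hopen : ∀ g : G, IsOpen {x : G | x < g})
    (n : ℕ) (T : Fin n → Set G) (hT : ∀ i, LCF0 (T i))
    (hTpos : ∀ i, T i ⊆ {g : G | 0 < g}) :
    ¬∃ f : ℕ → G,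
      (∀ k, f k ∈ {g : G | ∃ t : Fin n → G, (∀ i, t i ∈ T i) ∧ (List.ofFn t).sum = g}) ∧
      ∀ k, f k < f (k + 1) :=
  stmt_13_general hcompat hopen n T hT hTpos
end

section
/- There is no strictly increasing sequence of n-term Egyptian fractions: for fixed n ≥ 1, there is no function f : ℕ → ℝ with f(k) < f(k+1) for all k such that each f(k) is a sum of exactly n unit fractions. -/
/-!
Induction on `n`. Every term of a strictly increasing sequence `f` of `(n + 1)`-term Egyptian
fractions is at least `f 0 > 0`, so the smallest denominator `d` of each term satisfies
`d * f 0 ≤ n + 1`. Some value of `d` therefore occurs infinitely often, and along those indices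
removing `1 / d` leaves a strictly increasing sequence of `n`-term Egyptian fractions.
-/

open Finset Filter

def egyptianFractions (n : ℕ) : Set ℝ :=
  {x | ∃ m : Fin n → ℕ, (∀ i, 1 ≤ m i) ∧ x = ∑ i, (1 : ℝ) / m i}

theorem egyptianFractions_zero : egyptianFractions 0 = {0} := by
  ext x
  simp [egyptianFractions]

theorem pos_of_mem_egyptianFractions_succ {n : ℕ} {x : ℝ} (hx : x ∈ egyptianFractions (n + 1)) :
    0 < x := by
  obtain ⟨m, hm, rfl⟩ := hx
  refine sum_pos (fun i _ => ?_) univ_nonempty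
  have : (1 : ℝ) ≤ m i := by exact_mod_cast hm i
  positivity

theorem exists_sub_one_div_mem_egyptianFractions {n : ℕ} {x : ℝ}
    (hx : x ∈ egyptianFractions (n + 1)) :
    ∃ d : ℕ, (d : ℝ) * x ≤ n + 1 ∧ x - 1 / d ∈ egyptianFractions n := by
  obtain ⟨m, hm, rfl⟩ := hx
  obtain ⟨i, -, hi⟩ := exists_min_image univ m univ_nonempty
  refine ⟨m i, ?_, fun j => m (i.succAbove j), fun j => hm _, ?_⟩
  · have hd : (0 : ℝ) < m i := by exact_mod_cast hm i
    have hle : ∑ j, (1 : ℝ) / m j ≤ (n + 1) * (1 / m i) := by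
      calc ∑ j, (1 : ℝ) / m j ≤ ∑ _j : Fin (n + 1), (1 : ℝ) / m i :=
            sum_le_sum fun j _ => one_div_le_one_div_of_le hd (by exact_mod_cast hi j (mem_univ j))
        _ = (n + 1) * (1 / m i) := by simp
    calc (m i : ℝ) * ∑ j, (1 : ℝ) / m j ≤ m i * ((n + 1) * (1 / m i)) := by gcongr
      _ = n + 1 := by field_simp
  · rw [Fin.sum_univ_succAbove _ i]
    ring

theorem exists_strictMono_comp_eq_const {β : Type*} {s : Set β} (hs : s.Finite) (g : ℕ → β)
    (hg : ∀ k, g k ∈ s) : ∃ b, ∃ φ : ℕ → ℕ, StrictMono φ ∧ ∀ k, g (φ k) = b := by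
  have : Finite s := hs.to_subtype
  obtain ⟨b, hb⟩ := Finite.exists_infinite_fiber fun k => (⟨g k, hg k⟩ : s)
  have hinf : {k | g k = b}.Infinite := by
    rw [← Set.infinite_coe_iff]
    simpa [Set.preimage, Subtype.ext_iff] using hb
  exact ⟨b, extraction_of_frequently_atTop (Nat.frequently_atTop_iff_infinite.2 hinf)⟩

theorem not_strictMono_of_forall_mem_egyptianFractions (n : ℕ) {f : ℕ → ℝ}
    (hf : ∀ k, f k ∈ egyptianFractions n) : ¬StrictMono f := by
  induction n generalizing f with
  | zero =>
    simp only [egyptianFractions_zero, Set.mem_singleton_iff] at hf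
    intro hmono
    simpa [hf] using hmono (zero_lt_one' ℕ)
  | succ n ih =>
    intro hmono
    choose d hd hrest using fun k => exists_sub_one_div_mem_egyptianFractions (hf k)
    have hf0 : 0 < f 0 := pos_of_mem_egyptianFractions_succ (hf 0)
    have hbound : ∀ k, d k ∈ Set.Iic ⌊(n + 1 : ℝ) / f 0⌋₊ := fun k => by
      refine Nat.le_floor ((le_div_iff₀ hf0).2 ?_)
      calc (d k : ℝ) * f 0 ≤ d k * f k := by gcongr; exact hmono.monotone (Nat.zero_le k)
        _ ≤ n + 1 := hd k
    obtain ⟨b, φ, hφ, hdφ⟩ := exists_strictMono_comp_eq_const (Set.finite_Iic _) d hbound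
    refine ih (f := fun k => f (φ k) - 1 / b) (fun k => hdφ k ▸ hrest (φ k)) ?_
    exact fun k l hkl => sub_lt_sub_right (hmono (hφ hkl)) _

theorem stmt_14_general (n : ℕ) :
    ¬∃ f : ℕ → ℝ,
      (∀ k, ∃ m : Fin n → ℕ, (∀ i, 1 ≤ m i) ∧ f k = ∑ i, (1 : ℝ) / (m i)) ∧
      ∀ k, f k < f (k + 1) := by
  rintro ⟨f, hf, hlt⟩
  exact not_strictMono_of_forall_mem_egyptianFractions n hf (strictMono_nat_of_lt_succ hlt)

theorem stmt_14 (n : ℕ) (hn : 1 ≤ n) :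
    ¬∃ f : ℕ → ℝ,
      (∀ k, ∃ m : Fin n → ℕ, (∀ i, 1 ≤ m i) ∧ f k = ∑ i, (1 : ℝ) / (m i)) ∧
      ∀ k, f k < f (k + 1) :=
  stmt_14_general n
end
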